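/- For each r ∈ [1,n], the Jucys–Murphy element l_r centralizes the subalgebra of H_n(A) generated by s_1,…,s_{r−2} and A^{⊗(r−1)} ⊗ 1^{⊗(n−r+1)}. In particular, the Jucys–Murphy elements l_1,…,l_n pairwise commute. -/

import Mathlib

/-!
Statement 7 (Lemma `JMcentS` and Corollary 3.17): the Jucys–Murphy element `l_r`
of `H_n(A)` centralizes the subalgebra generated by `s_1, …, s_{r-2}` and
`A^{⊗(r-1)} ⊗ 1^{⊗(n-r+1)}`; in particular, the Jucys–Murphy elements
`l_1, …, l_n` pairwise commute.

Here indices are `0`-based: `jmEl n D r` is the Jucys–Murphy element `l_{r+1}` of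
the paper, the transpositions below are `s_j = (j+1, j+2)` (`1`-based) with both
moved letters among the first `r` ones, and the pure tensors have `1`'s in all
slots with (`0`-based) index `≥ r`.
-/

open scoped TensorProduct


noncomputable section

/-- The distinguished element `Δ(1)` of a graded symmetric algebra. -/
noncomputable def DeltaElem (k A : Type*) [CommRing k] [Ring A] [Algebra k A]
    [Module.Free k A] [Module.Finite k A]
    (φ : A ≃ₗ[k] Module.Dual k A) : A ⊗[k] A :=
  TensorProduct.map φ.symm.toLinearMap φ.symm.toLinearMap
    ((TensorProduct.dualDistribEquiv k A A).symm
      ((LinearMap.mul' k A).dualMap (φ 1)))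

variable (k A : Type*) [CommRing k] [Ring A] [Algebra k A] (n : ℕ)

/-- The `n`-fold tensor power `A^{⊗ n}`. -/
abbrev TPow := PiTensorProduct k (fun _ : Fin n => A)

/-- The place permutation action of `σ ∈ S_n` on `A^{⊗n}`:
`^σ(v_1 ⊗ ⋯ ⊗ v_n) = v_{σ⁻¹ 1} ⊗ ⋯ ⊗ v_{σ⁻¹ n}`. -/
noncomputable def permAct (σ : Equiv.Perm (Fin n)) : TPow k A n ≃ₗ[k] TPow k A n :=
  PiTensorProduct.reindex k (fun _ : Fin n => A) σ

/-- The map `ι_{t,u} : A ⊗ A → A^{⊗n}` placing the two factors in slots `t` and `u`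
(`t ≠ u`) and `1`'s elsewhere. -/
noncomputable def slotEmb (t u : Fin n) (h : t ≠ u) : A ⊗[k] A →ₗ[k] TPow k A n :=
  TensorProduct.lift <| LinearMap.mk₂ k
    (fun a b => PiTensorProduct.tprod k
        (Function.update (Function.update (fun _ : Fin n => (1 : A)) t a) u b))
    (by
      intro a a' b
      try dsimp only
      rw [Function.update_comm h, Function.update_comm h, Function.update_comm h,
        MultilinearMap.map_update_add])
    (by
      intro c a b
      try dsimp only
      rw [Function.update_comm h, Function.update_comm h,
        MultilinearMap.map_update_smul])
    (by intro a b b'; rw [MultilinearMap.map_update_add])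
    (by intro c a b; rw [MultilinearMap.map_update_smul])

/-- `Δ_{t,u} := ι_{t,u}(Δ(1)) ∈ A^{⊗n}`. -/
noncomputable def DeltaSlot (D : A ⊗[k] A) (t u : Fin n) (h : t ≠ u) : TPow k A n :=
  slotEmb k A n t u h D

/-- Generators of the rank `n` affinization `H_n(A)`. -/
inductive AffGen : Type _
  | z : Fin n → AffGen
  | t : TPow k A n → AffGen
  | s : Equiv.Perm (Fin n) → AffGen

variable {k A}

open FreeAlgebra in
/-- The defining relations of the rank `n` affinization `H_n(A)` (relative to a
choice of distinguished element `D = Δ(1) ∈ A ⊗ A`): the relations of the free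
product `k[z_1,…,z_n] ⋆ A^{⊗n} ⋆ kS_n` together with the commutation relations
(3.4)–(3.6) of Definition 3.3. -/
inductive AffRel (D : A ⊗[k] A) :
    FreeAlgebra k (AffGen k A n) → FreeAlgebra k (AffGen k A n) → Prop
  -- `A^{⊗n}` is a subalgebra
  | t_add (a b : TPow k A n) :
      AffRel D (ι k (.t (a + b))) (ι k (.t a) + ι k (.t b))
  | t_smul (c : k) (a : TPow k A n) :
      AffRel D (ι k (.t (c • a))) (c • ι k (.t a))
  | t_mul (a b : TPow k A n) :
      AffRel D (ι k (.t (a * b))) (ι k (.t a) * ι k (.t b))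
  | t_one : AffRel D (ι k (.t 1)) 1
  -- `k S_n` is a subalgebra
  | s_mul (σ τ : Equiv.Perm (Fin n)) :
      AffRel D (ι k (.s (σ * τ))) (ι k (.s σ) * ι k (.s τ))
  | s_one : AffRel D (ι k (.s 1)) 1
  -- the polynomial generators commute
  | zz (i j : Fin n) :
      AffRel D (ι k (.z i) * ι k (.z j)) (ι k (.z j) * ι k (.z i))
  -- relation (3.4): `a z_j = z_j a`
  | az (a : TPow k A n) (j : Fin n) :
      AffRel D (ι k (.t a) * ι k (.z j)) (ι k (.z j) * ι k (.t a))
  -- relation (3.5): `s_i a = (^{s_i} a) s_i`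
  | sa (i : Fin n) (h : (i : ℕ) + 1 < n) (a : TPow k A n) :
      AffRel D (ι k (.s (Equiv.swap i ⟨i + 1, h⟩)) * ι k (.t a))
        (ι k (.t (permAct k A n (Equiv.swap i ⟨i + 1, h⟩) a)) *
          ι k (.s (Equiv.swap i ⟨i + 1, h⟩)))
  -- relation (3.6): `s_i z_j - z_{s_i j} s_i = (δ_{i,j} - δ_{i+1,j}) Δ_{i,i+1}`
  | sz (i : Fin n) (h : (i : ℕ) + 1 < n) (j : Fin n) :
      AffRel D (ι k (.s (Equiv.swap i ⟨i + 1, h⟩)) * ι k (.z j))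
        (ι k (.z (Equiv.swap i ⟨i + 1, h⟩ j)) * ι k (.s (Equiv.swap i ⟨i + 1, h⟩)) +
          ((if j = i then (1 : k) else 0) - (if j = ⟨i + 1, h⟩ then (1 : k) else 0)) •
            ι k (.t (DeltaSlot k A n D i ⟨i + 1, h⟩
              (ne_of_lt (Fin.lt_def.mpr (Nat.lt_succ_self _))))))

/-- The rank `n` affinization `H_n(A)` of the symmetric algebra `A`, presented by
generators and relations. -/
abbrev AffAlg (D : A ⊗[k] A) := RingQuot (AffRel (k := k) (A := A) n D)

variable (D : A ⊗[k] A)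

/-- The generator `z_i ∈ H_n(A)`. -/
noncomputable def zE (i : Fin n) : AffAlg n D :=
  RingQuot.mkAlgHom k (AffRel n D) (FreeAlgebra.ι k (.z i))

/-- The canonical map `A^{⊗n} → H_n(A)`. -/
noncomputable def tE : TPow k A n →ₗ[k] AffAlg n D where
  toFun a := RingQuot.mkAlgHom k (AffRel n D) (FreeAlgebra.ι k (.t a))
  map_add' a b := by
    have := RingQuot.mkAlgHom_rel k (AffRel.t_add (D := D) (n := n) a b)
    simpa using this
  map_smul' c a := by
    have := RingQuot.mkAlgHom_rel k (AffRel.t_smul (D := D) (n := n) c a)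
    simpa using this

/-- The canonical image of `σ ∈ S_n` in `H_n(A)`. -/
noncomputable def sE (σ : Equiv.Perm (Fin n)) : AffAlg n D :=
  RingQuot.mkAlgHom k (AffRel n D) (FreeAlgebra.ι k (.s σ))

/-- The canonical map `k S_n → H_n(A)`. -/
noncomputable def gE : MonoidAlgebra k (Equiv.Perm (Fin n)) →ₐ[k] AffAlg n D :=
  MonoidAlgebra.lift k (AffAlg n D) (Equiv.Perm (Fin n))
    { toFun := fun σ => sE n D σ
      map_one' := by
        have := RingQuot.mkAlgHom_rel k (AffRel.s_one (D := D) (n := n))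
        simpa [sE] using this
      map_mul' := fun σ τ => by
        have := RingQuot.mkAlgHom_rel k (AffRel.s_mul (D := D) (n := n) σ τ)
        simpa [sE] using this }

/-- The canonical `k`-linear map `k[z_1, …, z_n] → H_n(A)` sending a monomial
`z^m` to `z_1^{m_1} ⋯ z_n^{m_n}`. -/
noncomputable def zMon : MvPolynomial (Fin n) k →ₗ[k] AffAlg n D :=
  (MvPolynomial.basisMonomials (Fin n) k).constr k
    (fun m => ((List.finRange n).map (fun i => zE n D i ^ m i)).prod)

/-- The underlying `k`-module `V = k[z_1,…,z_n] ⊗ A^{⊗n} ⊗ kS_n`. -/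
abbrev AffModV := MvPolynomial (Fin n) k ⊗[k]
  (TPow k A n ⊗[k] MonoidAlgebra k (Equiv.Perm (Fin n)))

/-- The multiplication map `V → H_n(A)`, `f ⊗ a ⊗ w ↦ f a w`. -/
noncomputable def mulMap : AffModV (k := k) (A := A) n →ₗ[k] AffAlg n D :=
  TensorProduct.lift <| (LinearMap.mul k (AffAlg n D)).compl₁₂ (zMon n D)
    (TensorProduct.lift <| (LinearMap.mul k (AffAlg n D)).compl₁₂ (tE n D)
      (gE n D).toLinearMap)

end

variable {k A : Type*} [CommRing k] [Ring A] [Algebra k A]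

/-- The Jucys–Murphy element `l_r := -∑_{t<r} Δ_{t,r} (t,r)` of `H_n(A)`. -/
noncomputable def jmEl (n : ℕ) (D : A ⊗[k] A) (r : Fin n) : AffAlg n D :=
  - ∑ t : Fin n, if h : t < r then
      tE n D (DeltaSlot k A n D t r (ne_of_lt h)) * sE n D (Equiv.swap t r)
    else 0

/-!
The bimodule property of `φ` gives `(a ⊗ 1) Δ(1) = Δ(1) (1 ⊗ a)`, as both sides pair with
`x ⊗ y` to `φ 1 (x a y)`. Placed in slots `t, r`, this says `Δ_{t,r} · ^{(t r)}a = a · Δ_{t,r}`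
whenever `a` has a `1` in slot `r`, so every summand `Δ_{t,r} (t r)` of `l_r` commutes with
`A^{⊗(r-1)} ⊗ 1^{⊗(n-r+1)}`. A permutation `σ` fixing `r, …, n` conjugates the summand for `t`
into the summand for `σ t`, so `l_r` also commutes with `s_1, …, s_{r-2}`. Finally, for `s < r`
the element `l_s` lies in the subalgebra generated by these, hence commutes with `l_r`.
-/

section DistinguishedElement

variable [Module.Free k A] [Module.Finite k A]

noncomputable def tensorDualEquiv (φ : A ≃ₗ[k] Module.Dual k A) :
    A ⊗[k] A ≃ₗ[k] Module.Dual k (A ⊗[k] A) :=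
  (TensorProduct.congr φ φ).trans (TensorProduct.dualDistribEquiv k A A)

variable (φ : A ≃ₗ[k] Module.Dual k A)

lemma tensorDualEquiv_tmul_tmul (u v x y : A) :
    tensorDualEquiv φ (u ⊗ₜ v) (x ⊗ₜ y) = φ u x * φ v y := by
  simp [tensorDualEquiv, TensorProduct.dualDistribEquiv]

lemma tensorDualEquiv_deltaElem :
    tensorDualEquiv φ (DeltaElem k A φ) = (LinearMap.mul' k A).dualMap (φ 1) := by
  rw [tensorDualEquiv, LinearEquiv.trans_apply]
  exact congrArg _ ((TensorProduct.congr φ φ).apply_symm_apply _) |>.trans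
    ((TensorProduct.dualDistribEquiv k A A).apply_symm_apply _)

lemma tensorDualEquiv_tmul_one_mul (hbimod : ∀ a x b y : A, φ (a * x * b) y = φ x (b * y * a))
    (a : A) (z : A ⊗[k] A) (x y : A) :
    tensorDualEquiv φ ((a ⊗ₜ 1) * z) (x ⊗ₜ y) = tensorDualEquiv φ z ((x * a) ⊗ₜ y) := by
  induction z using TensorProduct.induction_on with
  | zero => simp
  | tmul u v =>
    rw [Algebra.TensorProduct.tmul_mul_tmul, one_mul, tensorDualEquiv_tmul_tmul,
      tensorDualEquiv_tmul_tmul, ← mul_one (a * u), hbimod, one_mul]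
  | add z₁ z₂ h₁ h₂ => simp [mul_add, h₁, h₂]

lemma tensorDualEquiv_mul_one_tmul (hbimod : ∀ a x b y : A, φ (a * x * b) y = φ x (b * y * a))
    (a : A) (z : A ⊗[k] A) (x y : A) :
    tensorDualEquiv φ (z * (1 ⊗ₜ a)) (x ⊗ₜ y) = tensorDualEquiv φ z (x ⊗ₜ (a * y)) := by
  induction z using TensorProduct.induction_on with
  | zero => simp
  | tmul u v =>
    rw [Algebra.TensorProduct.tmul_mul_tmul, mul_one, tensorDualEquiv_tmul_tmul,
      tensorDualEquiv_tmul_tmul, ← mul_one (a * y), ← hbimod, one_mul]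
  | add z₁ z₂ h₁ h₂ => simp [add_mul, h₁, h₂]

lemma tmul_one_mul_deltaElem (hbimod : ∀ a x b y : A, φ (a * x * b) y = φ x (b * y * a))
    (a : A) :
    (a ⊗ₜ[k] (1 : A)) * DeltaElem k A φ = DeltaElem k A φ * ((1 : A) ⊗ₜ[k] a) := by
  refine (tensorDualEquiv φ).injective (TensorProduct.ext' fun x y => ?_)
  rw [tensorDualEquiv_tmul_one_mul φ hbimod, tensorDualEquiv_mul_one_tmul φ hbimod,
    tensorDualEquiv_deltaElem]
  simp [mul_assoc]

end DistinguishedElement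

section TensorPower

variable {n : ℕ}

lemma permAct_tprod (σ : Equiv.Perm (Fin n)) (v : Fin n → A) :
    permAct k A n σ (PiTensorProduct.tprod k v) = PiTensorProduct.tprod k (v ∘ σ.symm) := by
  simp [permAct, Function.comp_def]

lemma permAct_one (a : TPow k A n) : permAct k A n 1 a = a := by
  rw [permAct, Equiv.Perm.one_def, PiTensorProduct.reindex_refl]
  rfl

lemma permAct_mul (σ τ : Equiv.Perm (Fin n)) (a : TPow k A n) :
    permAct k A n (σ * τ) a = permAct k A n σ (permAct k A n τ a) := by
  rw [permAct, permAct, permAct, ← LinearEquiv.trans_apply, PiTensorProduct.reindex_trans]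
  rfl

lemma slotEmb_tmul (t u : Fin n) (h : t ≠ u) (x y : A) :
    slotEmb k A n t u h (x ⊗ₜ y) =
      PiTensorProduct.tprod k (Function.update (Function.update 1 t x) u y) :=
  rfl

lemma permAct_slotEmb (σ : Equiv.Perm (Fin n)) (t u : Fin n) (h : t ≠ u) (z : A ⊗[k] A) :
    permAct k A n σ (slotEmb k A n t u h z) = slotEmb k A n (σ t) (σ u) (σ.injective.ne h) z := by
  induction z using TensorProduct.induction_on with
  | zero => simp
  | tmul x y =>
    rw [slotEmb_tmul, slotEmb_tmul, permAct_tprod]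
    congr 1
    ext i
    obtain ⟨j, rfl⟩ := σ.surjective i
    simp [Function.update_apply, σ.injective.eq_iff]
  | add z₁ z₂ h₁ h₂ => simp [h₁, h₂]

lemma slotEmb_mul (t u : Fin n) (h : t ≠ u) (z z' : A ⊗[k] A) :
    slotEmb k A n t u h (z * z') = slotEmb k A n t u h z * slotEmb k A n t u h z' := by
  induction z using TensorProduct.induction_on with
  | zero => simp
  | tmul x y =>
    induction z' using TensorProduct.induction_on with
    | zero => simp
    | tmul x' y' =>
      rw [Algebra.TensorProduct.tmul_mul_tmul, slotEmb_tmul, slotEmb_tmul, slotEmb_tmul,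
        PiTensorProduct.tprod_mul_tprod]
      congr 1
      ext i
      simp only [Function.update_apply, Pi.mul_apply, Pi.one_apply]
      split_ifs <;> simp
    | add z₁ z₂ h₁ h₂ => simp [mul_add, h₁, h₂]
  | add z₁ z₂ h₁ h₂ => simp [add_mul, h₁, h₂]

lemma tprod_eq_slotEmb_mul (t u : Fin n) (h : t ≠ u) (v : Fin n → A) :
    PiTensorProduct.tprod k v = slotEmb k A n t u h (v t ⊗ₜ v u) *
      PiTensorProduct.tprod k (Function.update (Function.update v t 1) u 1) := by
  rw [slotEmb_tmul, PiTensorProduct.tprod_mul_tprod]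
  congr 1
  ext i
  simp only [Function.update_apply, Pi.mul_apply, Pi.one_apply]
  split_ifs <;> simp_all

lemma commute_slotEmb_tprod (t u : Fin n) (h : t ≠ u) (z : A ⊗[k] A) {w : Fin n → A}
    (ht : w t = 1) (hu : w u = 1) :
    Commute (slotEmb k A n t u h z) (PiTensorProduct.tprod k w) := by
  induction z using TensorProduct.induction_on with
  | zero => simp
  | tmul x y =>
    rw [slotEmb_tmul]
    refine Commute.tprod (funext fun i => ?_)
    simp only [Function.update_apply, Pi.mul_apply, Pi.one_apply]
    split_ifs <;> simp_all
  | add z₁ z₂ h₁ h₂ => simpa using h₁.add_left h₂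

/-- Both `v` and `^{(t u)}v` factor as `ι_{t,u}(·) * w` with `w` trivial in slots `t` and `u`,
so `v_t` only has to be moved across `D`. -/
lemma slotEmb_mul_permAct_swap {D : A ⊗[k] A} (hD : ∀ a : A, (a ⊗ₜ[k] 1) * D = D * (1 ⊗ₜ a))
    (t u : Fin n) (h : t ≠ u) {v : Fin n → A} (hv : v u = 1) :
    slotEmb k A n t u h D * permAct k A n (Equiv.swap t u) (PiTensorProduct.tprod k v) =
      PiTensorProduct.tprod k v * slotEmb k A n t u h D := by
  set ι := slotEmb k A n t u h
  set w := Function.update (Function.update v t 1) u 1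
  have hw : Commute (ι D) (PiTensorProduct.tprod k w) :=
    commute_slotEmb_tprod t u h D (by simp [w, h]) (by simp [w])
  have hv' : Function.update (Function.update (v ∘ Equiv.swap t u) t 1) u 1 = w := by
    ext i
    simp only [w, Function.update_apply, Function.comp_apply]
    split_ifs <;> simp_all [Equiv.swap_apply_of_ne_of_ne]
  rw [permAct_tprod, Equiv.symm_swap, tprod_eq_slotEmb_mul t u h (v ∘ _), hv',
    tprod_eq_slotEmb_mul t u h v]
  simp only [Function.comp_apply, Equiv.swap_apply_left, Equiv.swap_apply_right, hv]
  calc ι D * (ι (1 ⊗ₜ v t) * PiTensorProduct.tprod k w)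
      = ι (D * (1 ⊗ₜ v t)) * PiTensorProduct.tprod k w := by rw [slotEmb_mul, mul_assoc]
    _ = ι (v t ⊗ₜ 1) * (ι D * PiTensorProduct.tprod k w) := by rw [← hD, slotEmb_mul, mul_assoc]
    _ = ι (v t ⊗ₜ 1) * PiTensorProduct.tprod k w * ι D := by rw [hw.eq, mul_assoc]

end TensorPower

section Affinization

variable {n : ℕ} {D : A ⊗[k] A}

lemma tE_mul (a b : TPow k A n) : tE n D (a * b) = tE n D a * tE n D b :=
  (RingQuot.mkAlgHom_rel k (AffRel.t_mul a b)).trans (map_mul _ _ _)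

lemma sE_mul (σ τ : Equiv.Perm (Fin n)) : sE n D (σ * τ) = sE n D σ * sE n D τ :=
  (RingQuot.mkAlgHom_rel k (AffRel.s_mul σ τ)).trans (map_mul _ _ _)

lemma sE_one : sE n D (1 : Equiv.Perm (Fin n)) = 1 :=
  (RingQuot.mkAlgHom_rel k AffRel.s_one).trans (map_one _)

lemma sE_swap_succ_mul_tE (i : Fin n) (h : (i : ℕ) + 1 < n) (a : TPow k A n) :
    sE n D (Equiv.swap i ⟨i + 1, h⟩) * tE n D a =
      tE n D (permAct k A n (Equiv.swap i ⟨i + 1, h⟩) a) * sE n D (Equiv.swap i ⟨i + 1, h⟩) :=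
  (map_mul _ _ _).symm.trans <|
    (RingQuot.mkAlgHom_rel k (AffRel.sa i h a)).trans (map_mul _ _ _)

/-- Relation (3.5) for all permutations, as these are products of adjacent transpositions. -/
lemma sE_mul_tE (σ : Equiv.Perm (Fin n)) (a : TPow k A n) :
    sE n D σ * tE n D a = tE n D (permAct k A n σ a) * sE n D σ := by
  cases n with
  | zero => rw [Subsingleton.elim σ 1, sE_one, permAct_one, one_mul, mul_one]
  | succ m =>
    have hσ : σ ∈ Submonoid.closure (Set.range fun i : Fin m => Equiv.swap i.castSucc i.succ) := by
      rw [Equiv.Perm.mclosure_swap_castSucc_succ]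
      trivial
    induction hσ using Submonoid.closure_induction generalizing a with
    | mem τ hτ =>
      obtain ⟨i, rfl⟩ := hτ
      exact sE_swap_succ_mul_tE i.castSucc (Nat.succ_lt_succ i.isLt) a
    | one => rw [sE_one, permAct_one, one_mul, mul_one]
    | mul σ τ _ _ ihσ ihτ =>
      rw [sE_mul, permAct_mul, mul_assoc, ihτ, ← mul_assoc, ihσ, mul_assoc, ← sE_mul]

end Affinization

lemma Equiv.Perm.apply_lt_iff_of_forall_le_apply_eq {α : Type*} [LinearOrder α]
    {σ : Equiv.Perm α} {r : α} (hσ : ∀ u, r ≤ u → σ u = u) (u : α) : σ u < r ↔ u < r := by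
  constructor
  · intro h
    by_contra hu
    exact (hσ u (not_lt.1 hu) ▸ hu) h
  · intro hu
    by_contra h
    have hfix : σ u = u := σ.injective (hσ _ (not_lt.1 h))
    exact h (by rwa [hfix])

section JucysMurphy

variable {n : ℕ} {D : A ⊗[k] A}

lemma sE_mul_tE_deltaSlot_mul_sE_swap (σ : Equiv.Perm (Fin n)) {t u t' u' : Fin n}
    (h : t ≠ u) (h' : t' ≠ u') (ht : σ t = t') (hu : σ u = u') :
    sE n D σ * (tE n D (DeltaSlot k A n D t u h) * sE n D (Equiv.swap t u)) =
      tE n D (DeltaSlot k A n D t' u' h') * sE n D (Equiv.swap t' u') * sE n D σ := by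
  subst ht hu
  rw [← mul_assoc, sE_mul_tE, DeltaSlot, DeltaSlot, permAct_slotEmb, mul_assoc, mul_assoc,
    ← sE_mul, ← sE_mul, Equiv.swap_apply_apply, inv_mul_cancel_right]

lemma commute_jmEl_sE (r : Fin n) {σ : Equiv.Perm (Fin n)} (hσ : ∀ u, r ≤ u → σ u = u) :
    Commute (jmEl n D r) (sE n D σ) := by
  have hlt := Equiv.Perm.apply_lt_iff_of_forall_le_apply_eq hσ
  rw [jmEl]
  refine Commute.neg_left (R := AffAlg n D) ?_
  apply Commute.symm
  rw [Commute, SemiconjBy, Finset.mul_sum, Finset.sum_mul]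
  refine Fintype.sum_equiv σ _ _ fun u => ?_
  by_cases hu : u < r
  · rw [dif_pos hu, dif_pos ((hlt u).2 hu),
      sE_mul_tE_deltaSlot_mul_sE_swap σ _ _ rfl (hσ r le_rfl)]
  · rw [dif_neg hu, dif_neg (mt (hlt u).1 hu), mul_zero, zero_mul]

lemma commute_jmEl_tE_tprod (hD : ∀ a : A, (a ⊗ₜ[k] 1) * D = D * (1 ⊗ₜ a)) (r : Fin n)
    {v : Fin n → A} (hv : ∀ i, r ≤ i → v i = 1) :
    Commute (jmEl n D r) (tE n D (PiTensorProduct.tprod k v)) := by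
  rw [jmEl]
  refine Commute.neg_left (R := AffAlg n D) ?_
  refine Commute.sum_left _ _ _ fun u _ => ?_
  split_ifs with hu
  · calc tE n D (DeltaSlot k A n D u r _) * sE n D (Equiv.swap u r) *
          tE n D (PiTensorProduct.tprod k v)
        = tE n D (DeltaSlot k A n D u r _ *
            permAct k A n (Equiv.swap u r) (PiTensorProduct.tprod k v)) *
          sE n D (Equiv.swap u r) := by rw [mul_assoc, sE_mul_tE, ← mul_assoc, tE_mul]
      _ = tE n D (PiTensorProduct.tprod k v) *
          (tE n D (DeltaSlot k A n D u r _) * sE n D (Equiv.swap u r)) := by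
        rw [DeltaSlot, slotEmb_mul_permAct_swap hD _ _ _ (hv r le_rfl), tE_mul, mul_assoc]
  · exact Commute.zero_left _

variable (D) in
def lowerGens (r : Fin n) : Set (AffAlg n D) :=
  {y : AffAlg n D | ∃ (j : Fin n) (h : (j : ℕ) + 1 < n),
      (j : ℕ) + 2 ≤ (r : ℕ) ∧ y = sE n D (Equiv.swap j ⟨(j : ℕ) + 1, h⟩)} ∪
    {y : AffAlg n D | ∃ v : Fin n → A,
      (∀ i : Fin n, r ≤ i → v i = 1) ∧ y = tE n D (PiTensorProduct.tprod k v)}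

lemma commute_jmEl_of_mem_adjoin (hD : ∀ a : A, (a ⊗ₜ[k] 1) * D = D * (1 ⊗ₜ a)) (r : Fin n)
    {x : AffAlg n D} (hx : x ∈ Algebra.adjoin k (lowerGens D r)) : Commute (jmEl n D r) x := by
  have hgens : lowerGens D r ⊆ Subalgebra.centralizer k {jmEl n D r} := by
    rintro y (⟨j, hj, hjr, rfl⟩ | ⟨v, hv, rfl⟩) <;>
      rw [SetLike.mem_coe, Subalgebra.mem_centralizer_iff] <;> rintro _ rfl
    · refine (commute_jmEl_sE r fun u (hu : (r : ℕ) ≤ u) => ?_).eq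
      exact Equiv.swap_apply_of_ne_of_ne (Fin.ne_of_val_ne (by omega))
        (Fin.ne_of_val_ne (show (u : ℕ) ≠ j + 1 by omega))
    · exact (commute_jmEl_tE_tprod hD r hv).eq
  exact ((Subalgebra.mem_centralizer_iff k).1 (Algebra.adjoin_le hgens hx) _ rfl)

lemma tE_slotEmb_mem_adjoin {r t u : Fin n} (h : t ≠ u) (ht : t < r) (hu : u < r)
    (z : A ⊗[k] A) : tE n D (slotEmb k A n t u h z) ∈ Algebra.adjoin k (lowerGens D r) := by
  induction z using TensorProduct.induction_on with
  | zero => simp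
  | tmul x y =>
    refine Algebra.subset_adjoin (Or.inr ⟨_, fun i hi => ?_, rfl⟩)
    rw [Function.update_of_ne (hu.trans_le hi).ne', Function.update_of_ne (ht.trans_le hi).ne']
  | add z₁ z₂ h₁ h₂ => rw [map_add, map_add]; exact add_mem h₁ h₂

/-- `(t s) = (t+1 s) (t t+1) (t+1 s)` reduces the distance `s - t`. -/
lemma sE_swap_mem_adjoin {r t s : Fin n} (hts : t < s) (hsr : s < r) :
    sE n D (Equiv.swap t s) ∈ Algebra.adjoin k (lowerGens D r) := by
  obtain ⟨m, hm⟩ := Nat.exists_eq_add_of_lt hts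
  induction m generalizing t with
  | zero =>
    have hs : (s : ℕ) = t + 1 := hm
    exact Algebra.subset_adjoin (Or.inl ⟨t, hs ▸ s.isLt, by omega, by congr; exact Fin.ext hs⟩)
  | succ m ih =>
    set t' : Fin n := ⟨t + 1, by omega⟩
    have htt' : t ≠ t' := Fin.ne_of_val_ne (by simp [t'])
    have hshorter : sE n D (Equiv.swap t' s) ∈ Algebra.adjoin k (lowerGens D r) :=
      ih (Fin.lt_def.2 (by simp [t']; omega)) (by simp [t']; omega)
    have hgen : sE n D (Equiv.swap t t') ∈ Algebra.adjoin k (lowerGens D r) :=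
      Algebra.subset_adjoin (Or.inl ⟨t, t'.isLt, by omega, rfl⟩)
    rw [Equiv.swap_comm t s, ← Equiv.swap_mul_swap_mul_swap htt' hts.ne, sE_mul, sE_mul]
    exact mul_mem (mul_mem hshorter hgen) hshorter

lemma jmEl_mem_adjoin {r s : Fin n} (hsr : s < r) :
    jmEl n D s ∈ Algebra.adjoin k (lowerGens D r) := by
  refine neg_mem (sum_mem fun t _ => ?_)
  split_ifs with hts
  · exact mul_mem (tE_slotEmb_mem_adjoin _ (hts.trans hsr) hsr D) (sE_swap_mem_adjoin hts hsr)
  · exact zero_mem _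

end JucysMurphy

theorem stmt7_general
    (k A : Type*) [CommRing k] [Ring A] [Algebra k A]
    [Module.Free k A] [Module.Finite k A]
    (φ : A ≃ₗ[k] Module.Dual k A)
    (hbimod : ∀ a x b y : A, φ (a * x * b) y = φ x (b * y * a))
    (n : ℕ) :
    letI D := DeltaElem k A φ
    -- `l_r` centralizes the subalgebra generated by `s_1, …, s_{r-2}` and
    -- `A^{⊗(r-1)} ⊗ 1^{⊗(n-r+1)}`
    (∀ r : Fin n,
      ∀ x ∈ Algebra.adjoin k
        ({y : AffAlg n D | ∃ (j : Fin n) (h : (j : ℕ) + 1 < n),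
            (j : ℕ) + 2 ≤ (r : ℕ) ∧ y = sE n D (Equiv.swap j ⟨(j : ℕ) + 1, h⟩)} ∪
          {y : AffAlg n D | ∃ v : Fin n → A,
            (∀ i : Fin n, r ≤ i → v i = 1) ∧ y = tE n D (PiTensorProduct.tprod k v)}),
        jmEl n D r * x = x * jmEl n D r) ∧
    -- in particular, the Jucys–Murphy elements pairwise commute
    (∀ r s : Fin n, jmEl n D r * jmEl n D s = jmEl n D s * jmEl n D r) := by
  have hD := tmul_one_mul_deltaElem φ hbimod
  refine ⟨fun r x hx => (commute_jmEl_of_mem_adjoin hD r hx).eq, fun r s => ?_⟩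
  rcases lt_trichotomy s r with hsr | rfl | hrs
  · exact (commute_jmEl_of_mem_adjoin hD r (jmEl_mem_adjoin hsr)).eq
  · rfl
  · exact (commute_jmEl_of_mem_adjoin hD s (jmEl_mem_adjoin hrs)).eq.symm

theorem stmt7
    (k A : Type*) [CommRing k] [IsNoetherianRing k] [Ring A] [Algebra k A]
    [Module.Free k A] [Module.Finite k A]
    (𝒜 : ℤ → Submodule k A) [GradedAlgebra 𝒜]
    (d : ℤ)
    (φ : A ≃ₗ[k] Module.Dual k A)
    (hbimod : ∀ a x b y : A, φ (a * x * b) y = φ x (b * y * a))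
    (hdeg : ∀ t s : ℤ, ∀ x ∈ 𝒜 t, ∀ y ∈ 𝒜 s, s ≠ d - t → φ x y = 0)
    (n : ℕ) :
    letI D := DeltaElem k A φ
    -- `l_r` centralizes the subalgebra generated by `s_1, …, s_{r-2}` and
    -- `A^{⊗(r-1)} ⊗ 1^{⊗(n-r+1)}`
    (∀ r : Fin n,
      ∀ x ∈ Algebra.adjoin k
        ({y : AffAlg n D | ∃ (j : Fin n) (h : (j : ℕ) + 1 < n),
            (j : ℕ) + 2 ≤ (r : ℕ) ∧ y = sE n D (Equiv.swap j ⟨(j : ℕ) + 1, h⟩)} ∪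
          {y : AffAlg n D | ∃ v : Fin n → A,
            (∀ i : Fin n, r ≤ i → v i = 1) ∧ y = tE n D (PiTensorProduct.tprod k v)}),
        jmEl n D r * x = x * jmEl n D r) ∧
    -- in particular, the Jucys–Murphy elements pairwise commute
    (∀ r s : Fin n, jmEl n D r * jmEl n D s = jmEl n D s * jmEl n D r) :=
  stmt7_general k A φ hbimod n
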